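/- arXiv:2504.19172 — 5 statements merged into one kernel-verified Lean document; each statement's English description precedes it below -/
import Mathlib

section
/- Let (𝓕_n)_{n≥0} be a filtration and (Y_n)_{n≥1} a sequence of square-integrable random variables with Y_n measurable with respect to 𝓕_n. If the random series ∑_{m=1}^∞ E(Y_m | 𝓕_{m-1}) and ∑_{m=1}^∞ E(Y_m² | 𝓕_{m-1}) both converge almost surely, then ∑_{n=1}^∞ Y_n converges almost surely. -/
/-!
Doob's decomposition splits the partial sums `S N = ∑ m < N, Y (m + 1)` into the predictable
part `∑ m < N, E[Y (m + 1) | 𝓕 m]`, which converges by hypothesis, and a martingale whose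
conditional squared increments are the conditional variances
`Var[Y (m + 1) | 𝓕 m] ≤ E[Y (m + 1) ^ 2 | 𝓕 m]`. A square-integrable martingale converges a.s.
where the sum of its conditional squared increments is bounded: stopping its increments before
that predictable sum exceeds `K` gives a martingale bounded in `L²`, hence in `L¹`, and Doob's
convergence theorem applies.
-/

open MeasureTheory Filter ProbabilityTheory

theorem sum_range_ite_partialSum_le (a : ℕ → ℝ) {K : ℝ} (hK : 0 ≤ K) (N : ℕ) :
    ∑ k ∈ Finset.range N,
      (if ∀ i ≤ k, ∑ j ∈ Finset.range (i + 1), a j ≤ K then a k else 0) ≤ K := by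
  induction N with
  | zero => simpa using hK
  | succ N ih =>
    by_cases hN : ∀ i ≤ N, ∑ j ∈ Finset.range (i + 1), a j ≤ K
    · calc _ = ∑ k ∈ Finset.range (N + 1), a k :=
            Finset.sum_congr rfl fun k hk => if_pos fun i hi =>
              hN i (hi.trans (Nat.lt_succ_iff.1 (Finset.mem_range.1 hk)))
        _ ≤ K := hN N le_rfl
    · rwa [Finset.sum_range_succ, if_neg hN, add_zero]

namespace MeasureTheory

variable {Ω : Type*} {m0 : MeasurableSpace Ω} {μ : Measure Ω} {𝓕 : Filtration ℕ m0}
  {M X : ℕ → Ω → ℝ}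

theorem eLpNorm_one_le_sqrt_of_integral_sq_le [IsProbabilityMeasure μ] {f : Ω → ℝ}
    (hf : MemLp f 2 μ) {K : ℝ} (hK : ∫ ω, f ω ^ 2 ∂μ ≤ K) :
    eLpNorm f 1 μ ≤ ENNReal.ofReal √K := by
  refine (eLpNorm_le_eLpNorm_of_exponent_le one_le_two hf.aestronglyMeasurable).trans ?_
  rw [hf.eLpNorm_eq_integral_rpow_norm two_ne_zero ENNReal.ofNat_ne_top]
  refine ENNReal.ofReal_le_ofReal ?_
  simp only [ENNReal.toReal_ofNat, Real.rpow_two, Real.norm_eq_abs, sq_abs, Real.sqrt_eq_rpow,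
    one_div]
  exact Real.rpow_le_rpow (integral_nonneg fun ω => sq_nonneg _) hK (by norm_num)

theorem Martingale.integral_mul_eq_integral_sq [SigmaFiniteFiltration μ 𝓕]
    (hM : Martingale M 𝓕 μ) (hL2 : ∀ n, MemLp (M n) 2 μ) {i j : ℕ} (hij : i ≤ j) :
    ∫ ω, M i ω * M j ω ∂μ = ∫ ω, M i ω ^ 2 ∂μ := calc
  ∫ ω, M i ω * M j ω ∂μ = ∫ ω, (μ[M i * M j | 𝓕 i]) ω ∂μ := (integral_condExp (𝓕.le i)).symm
  _ = ∫ ω, (M i * μ[M j | 𝓕 i]) ω ∂μ := integral_congr_ae <|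
      condExp_mul_of_stronglyMeasurable_left (hM.stronglyAdapted i)
        ((hL2 i).integrable_mul (hL2 j)) (hM.integrable j)
  _ = ∫ ω, M i ω ^ 2 ∂μ := integral_congr_ae <| by
      filter_upwards [hM.condExp_ae_eq hij] with ω hω
      simp [hω, sq]

theorem Martingale.integral_sub_sq [SigmaFiniteFiltration μ 𝓕]
    (hM : Martingale M 𝓕 μ) (hL2 : ∀ n, MemLp (M n) 2 μ) {i j : ℕ} (hij : i ≤ j) :
    ∫ ω, (M j ω - M i ω) ^ 2 ∂μ = ∫ ω, M j ω ^ 2 ∂μ - ∫ ω, M i ω ^ 2 ∂μ := by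
  have hsq : ∀ n, Integrable (fun ω => M n ω ^ 2) μ := fun n => (hL2 n).integrable_sq
  have hmul : Integrable (fun ω => 2 * (M i ω * M j ω)) μ :=
    ((hL2 i).integrable_mul (hL2 j)).const_mul 2
  simp_rw [sub_sq', fun ω => mul_assoc 2 (M j ω) (M i ω), fun ω => mul_comm (M j ω) (M i ω)]
  have hsum : Integrable (fun ω => M j ω ^ 2 + M i ω ^ 2) μ := (hsq j).add (hsq i)
  rw [integral_sub hsum hmul, integral_add (hsq j) (hsq i), integral_const_mul,
    hM.integral_mul_eq_integral_sq hL2 hij]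
  ring

theorem Martingale.integral_sq_eq_sum [SigmaFiniteFiltration μ 𝓕]
    (hM : Martingale M 𝓕 μ) (hL2 : ∀ n, MemLp (M n) 2 μ) (N : ℕ) :
    ∫ ω, M N ω ^ 2 ∂μ =
      ∫ ω, M 0 ω ^ 2 ∂μ + ∑ k ∈ Finset.range N, ∫ ω, (M (k + 1) ω - M k ω) ^ 2 ∂μ := by
  simp_rw [hM.integral_sub_sq hL2 (Nat.le_succ _),
    Finset.sum_range_sub (fun n => ∫ ω, M n ω ^ 2 ∂μ)]
  ring

theorem Martingale.sum_mul_sub [IsFiniteMeasure μ] (hM : Martingale M 𝓕 μ) {R : ℝ}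
    {ξ : ℕ → Ω → ℝ} (hξ : StronglyAdapted 𝓕 ξ) (hbdd : ∀ n ω, ξ n ω ≤ R)
    (hnonneg : ∀ n ω, 0 ≤ ξ n ω) :
    Martingale (fun n => ∑ k ∈ Finset.range n, ξ k * (M (k + 1) - M k)) 𝓕 μ := by
  refine martingale_iff.2 ⟨?_, hM.submartingale.sum_mul_sub hξ hbdd hnonneg⟩
  have := (hM.neg.submartingale.sum_mul_sub hξ hbdd hnonneg).neg
  convert this using 1
  ext n ω
  simp only [Pi.neg_apply, Finset.sum_apply, Pi.mul_apply, Pi.sub_apply, ← Finset.sum_neg_distrib]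
  exact Finset.sum_congr rfl fun k _ => by ring

theorem Martingale.exists_ae_tendsto_of_integral_sq_le [IsProbabilityMeasure μ]
    (hM : Martingale M 𝓕 μ) (hL2 : ∀ n, MemLp (M n) 2 μ) {K : ℝ}
    (hK : ∀ n, ∫ ω, M n ω ^ 2 ∂μ ≤ K) :
    ∀ᵐ ω ∂μ, ∃ c, Tendsto (fun n => M n ω) atTop (nhds c) :=
  hM.submartingale.exists_ae_tendsto_of_bdd (R := (√K).toNNReal) fun n =>
    eLpNorm_one_le_sqrt_of_integral_sq_le (hL2 n) (hK n)

theorem integral_indicator_sq_eq_integral_indicator_condExp {m : MeasurableSpace Ω}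
    (hm : m ≤ m0) [SigmaFinite (μ.trim hm)] {s : Set Ω} (hs : MeasurableSet[m] s) {f : Ω → ℝ}
    (hf : MemLp f 2 μ) :
    ∫ ω, s.indicator f ω ^ 2 ∂μ = ∫ ω, s.indicator (μ[f ^ 2 | m]) ω ∂μ := calc
  ∫ ω, s.indicator f ω ^ 2 ∂μ = ∫ ω, s.indicator (f ^ 2) ω ∂μ := by
    congr 1 with ω
    by_cases h : ω ∈ s <;> simp [h]
  _ = ∫ ω, s.indicator (μ[f ^ 2 | m]) ω ∂μ := by
    rw [integral_indicator (hm s hs), integral_indicator (hm s hs)]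
    exact (setIntegral_condExp hm hf.integrable_sq hs).symm

theorem Martingale.sum_indicator_sub [IsFiniteMeasure μ] (hM : Martingale M 𝓕 μ)
    {C : ℕ → Set Ω} (hC : ∀ k, MeasurableSet[𝓕 k] (C k)) :
    Martingale (fun n => ∑ k ∈ Finset.range n, (C k).indicator (M (k + 1) - M k)) 𝓕 μ := by
  have hξ : ∀ k, (C k).indicator 1 * (M (k + 1) - M k) = (C k).indicator (M (k + 1) - M k) :=
    fun k => by ext ω; by_cases h : ω ∈ C k <;> simp [h]
  simp_rw [← hξ]
  exact hM.sum_mul_sub (R := 1) (fun k => stronglyMeasurable_one.indicator (hC k))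
    (fun k => Set.indicator_le_self' fun _ _ => zero_le_one)
    (fun k => Set.indicator_nonneg fun _ _ => zero_le_one)

theorem Martingale.integral_sq_sum_indicator_sub [IsFiniteMeasure μ] (hM : Martingale M 𝓕 μ)
    (hL2 : ∀ n, MemLp (M n) 2 μ) {C : ℕ → Set Ω} (hC : ∀ k, MeasurableSet[𝓕 k] (C k)) (n : ℕ) :
    ∫ ω, (∑ k ∈ Finset.range n, (C k).indicator (M (k + 1) - M k) ω) ^ 2 ∂μ =
      ∑ k ∈ Finset.range n, ∫ ω, (C k).indicator (μ[(M (k + 1) - M k) ^ 2 | 𝓕 k]) ω ∂μ := by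
  have hDL2 : ∀ k, MemLp (M (k + 1) - M k) 2 μ := fun k => (hL2 (k + 1)).sub (hL2 k)
  have hG := hM.sum_indicator_sub hC
  have hGL2 : ∀ n, MemLp (∑ k ∈ Finset.range n, (C k).indicator (M (k + 1) - M k)) 2 μ :=
    fun n => memLp_finsetSum' _ fun k _ => (hDL2 k).indicator (𝓕.le k _ (hC k))
  have := hG.integral_sq_eq_sum hGL2 n
  simp only [Finset.sum_apply, Finset.sum_range_succ_sub_sum, Finset.sum_range_zero,
    zero_pow two_ne_zero, integral_zero, zero_add] at this
  rw [this]
  exact Finset.sum_congr rfl fun k _ =>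
    integral_indicator_sq_eq_integral_indicator_condExp (𝓕.le k) (hC k) (hDL2 k)

theorem Martingale.ae_exists_tendsto_of_sum_condExp_sq_le [IsProbabilityMeasure μ]
    (hM : Martingale M 𝓕 μ) (hL2 : ∀ n, MemLp (M n) 2 μ) {K : ℝ} (hK : 0 ≤ K) :
    ∀ᵐ ω ∂μ, (∀ N, ∑ k ∈ Finset.range N, (μ[(M (k + 1) - M k) ^ 2 | 𝓕 k]) ω ≤ K) →
      ∃ c, Tendsto (fun n => M n ω) atTop (nhds c) := by
  set b : ℕ → Ω → ℝ := fun k => μ[(M (k + 1) - M k) ^ 2 | 𝓕 k]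
  set C : ℕ → Set Ω := fun k => {ω | ∀ i ≤ k, ∑ j ∈ Finset.range (i + 1), b j ω ≤ K}
  have hC : ∀ k, MeasurableSet[𝓕 k] (C k) := fun k => by
    simp only [C, Set.ofPred_forall]
    refine MeasurableSet.iInter fun i => MeasurableSet.iInter fun hi => measurableSet_le ?_
      measurable_const
    exact (Finset.stronglyMeasurable_fun_sum _ fun j hj =>
      stronglyMeasurable_condExp.mono (𝓕.mono (by simp at hj; omega))).measurable
  set G : ℕ → Ω → ℝ := fun n => ∑ k ∈ Finset.range n, (C k).indicator (M (k + 1) - M k)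
  have hGL2 : ∀ n, MemLp (G n) 2 μ := fun n => memLp_finsetSum' _ fun k _ =>
    ((hL2 (k + 1)).sub (hL2 k)).indicator (𝓕.le k _ (hC k))
  have hb : ∀ k, Integrable ((C k).indicator (b k)) μ := fun k =>
    integrable_condExp.indicator (𝓕.le k _ (hC k))
  have hGsq : ∀ n, ∫ ω, G n ω ^ 2 ∂μ ≤ K := fun n => calc
    ∫ ω, G n ω ^ 2 ∂μ = ∫ ω, ∑ k ∈ Finset.range n, (C k).indicator (b k) ω ∂μ := by
      simp only [G, b, Finset.sum_apply, hM.integral_sq_sum_indicator_sub hL2 hC,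
        integral_finsetSum _ fun k _ => hb k]
    _ ≤ ∫ _, K ∂μ := integral_mono (integrable_finsetSum _ fun k _ => hb k)
        (integrable_const K) fun ω => by
          simpa only [Set.indicator_apply, C, Set.mem_ofPred_eq]
            using sum_range_ite_partialSum_le (b · ω) hK n
    _ = K := by simp
  filter_upwards [(hM.sum_indicator_sub hC).exists_ae_tendsto_of_integral_sq_le hGL2 hGsq]
    with ω ⟨c, hc⟩ hbdd
  have hGM : ∀ n, G n ω + M 0 ω = M n ω := fun n => by
    have hmem : ∀ k, ω ∈ C k := fun k i _ => hbdd (i + 1)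
    simp [G, hmem, Finset.sum_apply, Finset.sum_range_sub (fun n => M n ω)]
  exact ⟨c + M 0 ω, (hc.add_const _).congr hGM⟩

theorem Martingale.ae_exists_tendsto_of_bddAbove_sum_condExp_sq [IsProbabilityMeasure μ]
    (hM : Martingale M 𝓕 μ) (hL2 : ∀ n, MemLp (M n) 2 μ) :
    ∀ᵐ ω ∂μ,
      BddAbove (Set.range fun N => ∑ k ∈ Finset.range N, (μ[(M (k + 1) - M k) ^ 2 | 𝓕 k]) ω) →
      ∃ c, Tendsto (fun n => M n ω) atTop (nhds c) := by
  have hK := ae_all_iff.2 fun K : ℕ => hM.ae_exists_tendsto_of_sum_condExp_sq_le hL2 K.cast_nonneg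
  filter_upwards [hK] with ω hω ⟨B, hB⟩
  exact hω ⌈B⌉₊ fun N => (hB ⟨N, rfl⟩).trans (Nat.le_ceil B)

theorem predictablePart_partialSums (N : ℕ) :
    predictablePart (fun N => ∑ k ∈ Finset.range N, X k) 𝓕 μ N =
      ∑ k ∈ Finset.range N, μ[X k | 𝓕 k] := by
  simp [predictablePart, Finset.sum_range_succ_sub_sum]

theorem martingalePart_partialSums_add_one_sub (k : ℕ) :
    martingalePart (fun N => ∑ k ∈ Finset.range N, X k) 𝓕 μ (k + 1) -
      martingalePart (fun N => ∑ k ∈ Finset.range N, X k) 𝓕 μ k = X k - μ[X k | 𝓕 k] := by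
  simp only [martingalePart, predictablePart_partialSums, Finset.sum_range_succ]
  abel

theorem ae_exists_tendsto_sum_of_tendsto_sum_condExp_of_bddAbove_sum_condVar
    [IsProbabilityMeasure μ] (hX : ∀ k, StronglyMeasurable[𝓕 (k + 1)] (X k))
    (hL2 : ∀ k, MemLp (X k) 2 μ) :
    ∀ᵐ ω ∂μ, (∃ l, Tendsto (fun N => ∑ k ∈ Finset.range N, (μ[X k | 𝓕 k]) ω) atTop (nhds l)) →
      BddAbove (Set.range fun N => ∑ k ∈ Finset.range N, (Var[X k; μ | 𝓕 k]) ω) →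
      ∃ l, Tendsto (fun N => ∑ k ∈ Finset.range N, X k ω) atTop (nhds l) := by
  set S : ℕ → Ω → ℝ := fun N => ∑ k ∈ Finset.range N, X k
  have hS : StronglyAdapted 𝓕 S := fun N => Finset.stronglyMeasurable_sum _ fun k hk =>
    (hX k).mono (𝓕.mono (Finset.mem_range.1 hk))
  have hSL2 : ∀ N, MemLp (S N) 2 μ := fun N => memLp_finsetSum' _ fun k _ => hL2 k
  have hML2 : ∀ N, MemLp (martingalePart S 𝓕 μ N) 2 μ := fun N => (hSL2 N).sub <| by
    rw [predictablePart_partialSums]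
    exact memLp_finsetSum' _ fun k _ => (hL2 k).condExp one_le_two
  have hM := martingale_martingalePart hS fun N => (hSL2 N).integrable one_le_two
  filter_upwards [hM.ae_exists_tendsto_of_bddAbove_sum_condExp_sq hML2] with ω hω ⟨l, hl⟩ hVar
  simp only [S, martingalePart_partialSums_add_one_sub] at hω
  obtain ⟨c, hc⟩ := hω hVar
  refine ⟨c + l, (hc.add hl).congr fun N => ?_⟩
  have hdecomp := congrFun (congrFun (martingalePart_add_predictablePart 𝓕 μ S) N) ω
  simpa only [Pi.add_apply, S, predictablePart_partialSums, Finset.sum_apply] using hdecomp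

end MeasureTheory

theorem series_convergence_from_conditional_series
    {Ω : Type*} {m0 : MeasurableSpace Ω} {P : Measure Ω} [IsProbabilityMeasure P]
    (𝓕 : Filtration ℕ m0) (Y : ℕ → Ω → ℝ)
    (hmeas : ∀ n, 1 ≤ n → StronglyMeasurable[𝓕 n] (Y n))
    (hL2 : ∀ n, 1 ≤ n → MemLp (Y n) 2 P)
    (h1 : ∀ᵐ ω ∂P, ∃ l : ℝ, Tendsto
      (fun N => ∑ m ∈ Finset.range N, (P[Y (m + 1)|𝓕 m]) ω) atTop (nhds l))
    (h2 : ∀ᵐ ω ∂P, ∃ l : ℝ, Tendsto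
      (fun N => ∑ m ∈ Finset.range N, (P[(fun ω => (Y (m + 1) ω) ^ 2)|𝓕 m]) ω) atTop (nhds l)) :
    ∀ᵐ ω ∂P, ∃ l : ℝ, Tendsto (fun N => ∑ m ∈ Finset.range N, Y (m + 1) ω) atTop (nhds l) := by
  have hVar_le := ae_all_iff.2 fun m =>
    condVar_ae_le_condExp_sq (𝓕.le m) (hL2 (m + 1) le_add_self)
  have hsq_nonneg : ∀ᵐ ω ∂P, ∀ m, 0 ≤ (P[(fun ω => (Y (m + 1) ω) ^ 2)|𝓕 m]) ω :=
    ae_all_iff.2 fun m => condExp_nonneg (Eventually.of_forall fun ω => sq_nonneg _)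
  have hVar : ∀ᵐ ω ∂P,
      BddAbove (Set.range fun N => ∑ m ∈ Finset.range N, (Var[Y (m + 1); P | 𝓕 m]) ω) := by
    filter_upwards [h2, hVar_le, hsq_nonneg] with ω ⟨l, hl⟩ hle hnonneg
    refine ⟨l, Set.forall_mem_range.2 fun N => ?_⟩
    calc _ ≤ ∑ m ∈ Finset.range N, (P[(fun ω => (Y (m + 1) ω) ^ 2)|𝓕 m]) ω :=
          Finset.sum_le_sum fun m _ => hle m
      _ ≤ l := sum_le_hasSum _ (fun m _ => hnonneg m)
          ((hasSum_iff_tendsto_nat_of_nonneg hnonneg l).2 hl)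
  filter_upwards [ae_exists_tendsto_sum_of_tendsto_sum_condExp_of_bddAbove_sum_condVar
    (fun m => hmeas (m + 1) le_add_self) (fun m => hL2 (m + 1) le_add_self), h1, hVar]
    with ω hconv using hconv
end

section
/- Let X_1, X_2, … be independent nonnegative random variables each with mean 1, M_0 = 1 and M_n = X_1 ⋯ X_n, and set a_n = E(√X_n) ∈ (0,1]. If ∑_n (1 - a_n) < ∞, then M_n converges almost surely and in L¹ to a random variable M_∞ with E(M_∞) = 1. -/
/-!
For `n ≤ m`, independence gives `E √(M_m M_n) = ∏_{n ≤ i < m} a_i`, and Cauchy–Schwarz applied to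
`|M_m - M_n| = |√M_m - √M_n| (√M_m + √M_n)` yields `E |M_m - M_n| ≤ 2 √(1 - (∏_{n ≤ i < m} a_i)²)`.
Since `∑ (1 - a_i) < ∞`, the partial products of `∏ a_i` decrease to a positive limit, so this
bound tends to `0` uniformly in `m ≥ n`. The nonnegative martingale `M_n` converges almost surely,
and Fatou's lemma turns the Cauchy bound into L¹ convergence to the almost sure limit, which
therefore has mean `1`.
-/

open MeasureTheory ProbabilityTheory Filter Finset Topology

theorem Real.tendsto_prod_range_tprod_of_summable_one_sub {a : ℕ → ℝ} (ha : ∀ n, 0 < a n)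
    (hsum : Summable fun n => 1 - a n) :
    Tendsto (fun n => ∏ i ∈ range n, a i) atTop (𝓝 (∏' i, a i)) ∧ 0 < ∏' i, a i := by
  have hs : Summable fun n => a n - 1 := by simpa using hsum.neg
  have hprod : Multipliable a := by simpa using Real.multipliable_one_add_of_summable hs
  refine ⟨hprod.hasProd.tendsto_prod_nat, (tprod_nonneg fun i => (ha i).le).lt_of_ne' ?_⟩
  simpa using tprod_one_add_ne_zero_of_summable (f := fun i => a i - 1)
    (fun i => by simpa using (ha i).ne') hs.norm

theorem Real.exists_tendsto_zero_one_sub_sq_prod_Ico_le {a : ℕ → ℝ} (ha_pos : ∀ n, 0 < a n)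
    (ha_le : ∀ n, a n ≤ 1) (hsum : Summable fun n => 1 - a n) :
    ∃ b : ℕ → ℝ, Tendsto b atTop (𝓝 0) ∧
      ∀ n m, n ≤ m → 1 - (∏ i ∈ Ico n m, a i) ^ 2 ≤ b n := by
  obtain ⟨hlim, hpos⟩ := tendsto_prod_range_tprod_of_summable_one_sub ha_pos hsum
  have hprod_pos (n : ℕ) : 0 < ∏ i ∈ range n, a i := prod_pos fun i _ => ha_pos i
  have hanti : Antitone fun n => ∏ i ∈ range n, a i := antitone_nat_of_succ_le fun n => by
    rw [prod_range_succ]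
    exact mul_le_of_le_one_right (hprod_pos n).le (ha_le n)
  refine ⟨fun n => 1 - ((∏' i, a i) / ∏ i ∈ range n, a i) ^ 2, ?_, fun n m hnm => ?_⟩
  · simpa [hpos.ne'] using
      (((tendsto_const_nhds (x := ∏' i, a i)).div hlim hpos.ne').pow 2).const_sub 1
  · have hle : (∏' i, a i) / ∏ i ∈ range n, a i ≤ ∏ i ∈ Ico n m, a i := by
      rw [div_le_iff₀ (hprod_pos n), mul_comm, prod_range_mul_prod_Ico _ hnm]
      exact hanti.le_of_tendsto hlim m
    exact sub_le_sub_left (pow_le_pow_left₀ (div_nonneg hpos.le (hprod_pos n).le) hle 2) 1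

section Independence

variable {Ω ι : Type*} {m0 : MeasurableSpace Ω} {μ : Measure Ω}

theorem ProbabilityTheory.iIndepFun.integral_finsetProd {X : ι → Ω → ℝ}
    (hX : iIndepFun X μ) (hmeas : ∀ i, Measurable (X i)) (s : Finset ι) :
    ∫ ω, ∏ i ∈ s, X i ω ∂μ = ∏ i ∈ s, ∫ ω, X i ω ∂μ := by
  classical
  induction s using Finset.induction_on with
  | empty => simp [hX.isProbabilityMeasure]
  | insert i s hi ih =>
    simp_rw [prod_insert hi, mul_comm (X i _), ← ih, mul_comm (∫ ω, X i ω ∂μ)]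
    have := (hX.indepFun_finsetProd_of_notMem hmeas hi).integral_mul_eq_mul_integral
      (Finset.aestronglyMeasurable_prod s fun i _ => (hmeas i).aestronglyMeasurable)
      (hmeas i).aestronglyMeasurable
    simpa [prod_fn] using this

theorem ProbabilityTheory.iIndepFun.integrable_finsetProd {X : ι → Ω → ℝ}
    (hX : iIndepFun X μ) (hmeas : ∀ i, Measurable (X i)) (hint : ∀ i, Integrable (X i) μ)
    (s : Finset ι) : Integrable (fun ω => ∏ i ∈ s, X i ω) μ := by
  classical
  have := hX.isProbabilityMeasure
  induction s using Finset.induction_on with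
  | empty => simp
  | insert i s hi ih =>
    simp_rw [prod_insert hi, mul_comm (X i _)]
    have hind := hX.indepFun_finsetProd_of_notMem hmeas hi
    have := hind.integrable_mul (by rwa [prod_fn]) (hint i)
    rwa [prod_fn] at this

theorem ProbabilityTheory.iIndepFun.martingale_prod_range_succ {X : ℕ → Ω → ℝ}
    (hX : ∀ i, StronglyMeasurable (X i)) (hindep : iIndepFun X μ)
    (hint : ∀ i, Integrable (X i) μ) (hmean : ∀ i, ∫ ω, X i ω ∂μ = 1) :
    Martingale (fun n ω => ∏ i ∈ range (n + 1), X i ω) (Filtration.natural X hX) μ := by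
  have := hindep.isProbabilityMeasure
  have hadapted : StronglyAdapted (Filtration.natural X hX)
      (fun n ω => ∏ i ∈ range (n + 1), X i ω) := fun n =>
    Finset.stronglyMeasurable_fun_prod _ fun i hi =>
      (Filtration.stronglyAdapted_natural hX i).mono
        (Filtration.mono _ (Nat.lt_succ_iff.mp (mem_range.mp hi)))
  have hprod_int := hindep.integrable_finsetProd (fun i => (hX i).measurable) hint
  refine martingale_nat hadapted (fun n => hprod_int _) fun n => ?_
  have hsplit : (fun ω => ∏ i ∈ range (n + 1 + 1), X i ω)
      = (fun ω => ∏ i ∈ range (n + 1), X i ω) * X (n + 1) := by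
    ext ω; simp [prod_range_succ _ (n + 1)]
  rw [hsplit]
  filter_upwards [condExp_mul_of_stronglyMeasurable_left (hadapted n)
      (hsplit ▸ hprod_int (range (n + 1 + 1))) (hint (n + 1)),
    hindep.condExp_natural_ae_eq_of_lt hX (Nat.lt_succ_self n)] with ω h1 h2
  simp [h1, h2, hmean]

end Independence

theorem MeasureTheory.Martingale.exists_ae_tendsto_of_nonneg {Ω : Type*}
    {m0 : MeasurableSpace Ω} {μ : Measure Ω} [IsFiniteMeasure μ] {ℱ : Filtration ℕ m0}
    {f : ℕ → Ω → ℝ} (hf : Martingale f ℱ μ) (hnonneg : ∀ n ω, 0 ≤ f n ω) :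
    ∃ g : Ω → ℝ, ∀ᵐ ω ∂μ, Tendsto (fun n => f n ω) atTop (𝓝 (g ω)) := by
  refine ⟨_, hf.submartingale.ae_tendsto_limitProcess (R := (∫ ω, f 0 ω ∂μ).toNNReal) fun n => ?_⟩
  have hint : ∫ ω, f n ω ∂μ = ∫ ω, f 0 ω ∂μ := by
    simpa using (hf.setIntegral_eq (Nat.zero_le n) MeasurableSet.univ).symm
  rw [eLpNorm_one_eq_lintegral_enorm, ← ofReal_integral_norm_eq_lintegral_enorm (hf.integrable n)]
  simp [Real.norm_of_nonneg (hnonneg n _), hint]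

section Integrals

variable {Ω : Type*} {m0 : MeasurableSpace Ω} {μ : Measure Ω}

theorem integral_mul_le_L2_mul_L2_of_nonneg {u v : Ω → ℝ} (hu0 : 0 ≤ᵐ[μ] u) (hv0 : 0 ≤ᵐ[μ] v)
    (hu : MemLp u 2 μ) (hv : MemLp v 2 μ) :
    ∫ ω, u ω * v ω ∂μ ≤ √(∫ ω, u ω ^ 2 ∂μ) * √(∫ ω, v ω ^ 2 ∂μ) := by
  have := integral_mul_le_Lp_mul_Lq_of_nonneg Real.HolderConjugate.two_two hu0 hv0
    (by simpa using hu) (by simpa using hv)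
  simpa [Real.sqrt_eq_rpow] using this

theorem integral_abs_sub_le_two_mul_sqrt_one_sub_sq {f g : Ω → ℝ} (hf0 : ∀ ω, 0 ≤ f ω)
    (hg0 : ∀ ω, 0 ≤ g ω) (hf : Integrable f μ) (hg : Integrable g μ)
    (hf1 : ∫ ω, f ω ∂μ = 1) (hg1 : ∫ ω, g ω ∂μ = 1) :
    ∫ ω, |f ω - g ω| ∂μ ≤ 2 * √(1 - (∫ ω, √(f ω * g ω) ∂μ) ^ 2) := by
  set h := ∫ ω, √(f ω * g ω) ∂μ
  have hdiff (ω : Ω) : (√(f ω) - √(g ω)) ^ 2 = f ω + g ω - 2 * √(f ω * g ω) := by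
    rw [Real.sqrt_mul (hf0 ω), sub_sq, Real.sq_sqrt (hf0 ω), Real.sq_sqrt (hg0 ω)]; ring
  have hsum (ω : Ω) : (√(f ω) + √(g ω)) ^ 2 = f ω + g ω + 2 * √(f ω * g ω) := by
    rw [Real.sqrt_mul (hf0 ω), add_sq, Real.sq_sqrt (hf0 ω), Real.sq_sqrt (hg0 ω)]; ring
  have hsqrt (u : Ω → ℝ) (hu : AEStronglyMeasurable u μ) :
      AEStronglyMeasurable (fun ω => √(u ω)) μ :=
    Real.continuous_sqrt.comp_aestronglyMeasurable hu
  have hadd : Integrable (fun ω => f ω + g ω) μ := hf.add hg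
  have hfg : Integrable (fun ω => √(f ω * g ω)) μ := by
    refine hadd.mono' (hsqrt _ (hf.1.mul hg.1)) (ae_of_all _ fun ω => ?_)
    rw [Real.norm_of_nonneg (Real.sqrt_nonneg _)]
    nlinarith [hdiff ω, sq_nonneg (√(f ω) - √(g ω)), Real.sqrt_nonneg (f ω * g ω)]
  have hint_diff : Integrable (fun ω => |√(f ω) - √(g ω)| ^ 2) μ := by
    simp_rw [sq_abs, hdiff]; exact hadd.sub (hfg.const_mul 2)
  have hint_sum : Integrable (fun ω => (√(f ω) + √(g ω)) ^ 2) μ := by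
    simp_rw [hsum]; exact hadd.add (hfg.const_mul 2)
  have hdiff_eq : ∫ ω, |√(f ω) - √(g ω)| ^ 2 ∂μ = 2 - 2 * h := by
    simp_rw [sq_abs, hdiff]
    rw [integral_sub hadd (hfg.const_mul 2), integral_add hf hg, integral_const_mul,
      hf1, hg1]; ring
  have hsum_eq : ∫ ω, (√(f ω) + √(g ω)) ^ 2 ∂μ = 2 + 2 * h := by
    simp_rw [hsum]
    rw [integral_add hadd (hfg.const_mul 2), integral_add hf hg, integral_const_mul,
      hf1, hg1]; ring
  calc ∫ ω, |f ω - g ω| ∂μ = ∫ ω, |√(f ω) - √(g ω)| * (√(f ω) + √(g ω)) ∂μ := by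
        refine integral_congr_ae (ae_of_all _ fun ω => ?_)
        dsimp only
        rw [← abs_of_nonneg (add_nonneg (Real.sqrt_nonneg (f ω)) (Real.sqrt_nonneg (g ω))),
          ← abs_mul, mul_comm, ← sq_sub_sq, Real.sq_sqrt (hf0 ω), Real.sq_sqrt (hg0 ω)]
    _ ≤ √(2 - 2 * h) * √(2 + 2 * h) := by
        rw [← hdiff_eq, ← hsum_eq]
        exact integral_mul_le_L2_mul_L2_of_nonneg (ae_of_all _ fun ω => abs_nonneg _)
          (ae_of_all _ fun ω => by positivity)
          ((memLp_two_iff_integrable_sq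
            (continuous_abs.comp_aestronglyMeasurable ((hsqrt f hf.1).sub (hsqrt g hg.1)))).2
            hint_diff)
          ((memLp_two_iff_integrable_sq ((hsqrt f hf.1).add (hsqrt g hg.1))).2 hint_sum)
    _ = 2 * √(1 - h ^ 2) := by
        rw [← Real.sqrt_mul (by rw [← hdiff_eq]; positivity), show (2 - 2 * h) * (2 + 2 * h)
          = 2 ^ 2 * (1 - h ^ 2) by ring, Real.sqrt_mul (by positivity), Real.sqrt_sq two_pos.le]

theorem tendsto_eLpNorm_one_sub_of_ae_tendsto {F : ℕ → Ω → ℝ} {G : Ω → ℝ} {b : ℕ → ℝ}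
    (hF : ∀ n, Integrable (F n) μ) (hFG : ∀ᵐ ω ∂μ, Tendsto (fun n => F n ω) atTop (𝓝 (G ω)))
    (hb : Tendsto b atTop (𝓝 0)) (hcauchy : ∀ n m, n ≤ m → ∫ ω, |F m ω - F n ω| ∂μ ≤ b n) :
    Tendsto (fun n => eLpNorm (F n - G) 1 μ) atTop (𝓝 0) := by
  have hle (n : ℕ) : eLpNorm (F n - G) 1 μ ≤ ENNReal.ofReal (b n) := by
    rw [← eLpNorm_neg, neg_sub]
    refine (Lp.eLpNorm_lim_le_liminf_eLpNorm (fun m => ((hF m).sub (hF n)).1) _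
      (by filter_upwards [hFG] with ω h using h.sub_const _)).trans
      (liminf_le_of_frequently_le' (Eventually.frequently ?_))
    filter_upwards [eventually_ge_atTop n] with m hm
    rw [eLpNorm_one_eq_lintegral_enorm, ← ofReal_integral_norm_eq_lintegral_enorm
      ((hF m).sub (hF n))]
    exact ENNReal.ofReal_le_ofReal (hcauchy n m hm)
  refine tendsto_of_tendsto_of_tendsto_of_le_of_le tendsto_const_nhds ?_ (fun _ => zero_le) hle
  simpa using ENNReal.tendsto_ofReal hb

end Integrals

section Kakutani

variable {Ω : Type*} {m0 : MeasurableSpace Ω} {μ : Measure Ω} {X : ℕ → Ω → ℝ}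

theorem ProbabilityTheory.iIndepFun.integral_sqrt_prod_range_mul_prod_range
    (hX : iIndepFun X μ) (hmeas : ∀ i, Measurable (X i)) (hpos : ∀ i ω, 0 ≤ X i ω)
    (hmean : ∀ i, ∫ ω, X i ω ∂μ = 1) {n m : ℕ} (hnm : n ≤ m) :
    ∫ ω, √((∏ i ∈ range m, X i ω) * ∏ i ∈ range n, X i ω) ∂μ
      = ∏ i ∈ Ico n m, ∫ ω, √(X i ω) ∂μ := by
  -- `√(M_m M_n) = ∏_{i < n} X_i * ∏_{n ≤ i < m} √X_i` is a product of functions of the `X_i`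
  set g : ℕ → ℝ → ℝ := fun i x => if i < n then x else √x
  have hg (i : ℕ) : Measurable (g i) := by by_cases h : i < n <;> simp [g, h] <;> fun_prop
  have hpointwise (ω : Ω) :
      √((∏ i ∈ range m, X i ω) * ∏ i ∈ range n, X i ω) = ∏ i ∈ range m, g i (X i ω) := by
    have hlow : ∏ i ∈ range n, g i (X i ω) = ∏ i ∈ range n, X i ω :=
      prod_congr rfl fun i hi => if_pos (mem_range.1 hi)
    have hhigh : ∏ i ∈ Ico n m, g i (X i ω) = ∏ i ∈ Ico n m, √(X i ω) :=
      prod_congr rfl fun i hi => if_neg (not_lt.2 (mem_Ico.1 hi).1)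
    rw [← prod_range_mul_prod_Ico _ hnm, ← prod_range_mul_prod_Ico _ hnm, hlow, hhigh,
      ← Real.sqrt_prod _ fun i _ => hpos i ω, mul_right_comm, ← sq,
      Real.sqrt_mul (sq_nonneg _), Real.sqrt_sq (prod_nonneg fun i _ => hpos i ω)]
  have hfactor := (hX.comp g hg).integral_finsetProd (fun i => (hg i).comp (hmeas i)) (range m)
  simp only [Function.comp_apply] at hfactor
  simp_rw [hpointwise, hfactor, ← prod_range_mul_prod_Ico _ hnm]
  rw [prod_eq_one fun i hi => by simp [g, mem_range.1 hi, hmean], one_mul]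
  exact prod_congr rfl fun i hi => by simp [g, not_lt.2 (mem_Ico.1 hi).1]

theorem ProbabilityTheory.iIndepFun.integral_abs_prod_range_sub_le
    (hX : iIndepFun X μ) (hmeas : ∀ i, Measurable (X i)) (hpos : ∀ i ω, 0 ≤ X i ω)
    (hint : ∀ i, Integrable (X i) μ) (hmean : ∀ i, ∫ ω, X i ω ∂μ = 1) {n m : ℕ} (hnm : n ≤ m) :
    ∫ ω, |∏ i ∈ range m, X i ω - ∏ i ∈ range n, X i ω| ∂μ
      ≤ 2 * √(1 - (∏ i ∈ Ico n m, ∫ ω, √(X i ω) ∂μ) ^ 2) := by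
  have hmean_prod (k : ℕ) : ∫ ω, ∏ i ∈ range k, X i ω ∂μ = 1 := by
    simp [hX.integral_finsetProd hmeas, hmean]
  rw [← hX.integral_sqrt_prod_range_mul_prod_range hmeas hpos hmean hnm]
  exact integral_abs_sub_le_two_mul_sqrt_one_sub_sq (fun ω => prod_nonneg fun i _ => hpos i ω)
    (fun ω => prod_nonneg fun i _ => hpos i ω) (hX.integrable_finsetProd hmeas hint _)
    (hX.integrable_finsetProd hmeas hint _) (hmean_prod m) (hmean_prod n)

end Kakutani

theorem kakutani_product_martingale
    {Ω : Type*} {m0 : MeasurableSpace Ω} {P : Measure Ω} [IsProbabilityMeasure P]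
    (X : ℕ → Ω → ℝ) (hXmeas : ∀ n, Measurable (X n))
    (hindep : iIndepFun X P)
    (hpos : ∀ n, ∀ ω, 0 ≤ X n ω)
    (hint : ∀ n, Integrable (X n) P)
    (hmean : ∀ n, ∫ ω, X n ω ∂P = 1)
    (M : ℕ → Ω → ℝ) (hM : ∀ n ω, M n ω = ∏ i ∈ Finset.range n, X i ω)
    (a : ℕ → ℝ) (ha : ∀ n, a n = ∫ ω, Real.sqrt (X n ω) ∂P)
    (ha_pos : ∀ n, 0 < a n) (ha_le : ∀ n, a n ≤ 1)
    (hsum : Summable (fun n => 1 - a n)) :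
    ∃ Mlim : Ω → ℝ,
      (∀ᵐ ω ∂P, Tendsto (fun n => M n ω) atTop (nhds (Mlim ω))) ∧
      Tendsto (fun n => ∫ ω, |M n ω - Mlim ω| ∂P) atTop (nhds 0) ∧
      ∫ ω, Mlim ω ∂P = 1 := by
  obtain rfl : M = fun n ω => ∏ i ∈ range n, X i ω := funext fun n => funext (hM n)
  have hMint (n : ℕ) : Integrable (fun ω => ∏ i ∈ range n, X i ω) P :=
    hindep.integrable_finsetProd hXmeas hint (range n)
  obtain ⟨Mlim, hae⟩ : ∃ Mlim : Ω → ℝ,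
      ∀ᵐ ω ∂P, Tendsto (fun n => ∏ i ∈ range n, X i ω) atTop (𝓝 (Mlim ω)) := by
    obtain ⟨g, hg⟩ := (hindep.martingale_prod_range_succ (fun n => (hXmeas n).stronglyMeasurable)
      hint hmean).exists_ae_tendsto_of_nonneg fun n ω => prod_nonneg fun i _ => hpos i ω
    exact ⟨g, hg.mono fun ω h => (tendsto_add_atTop_iff_nat 1).1 h⟩
  obtain ⟨b, hb, hb_le⟩ := Real.exists_tendsto_zero_one_sub_sq_prod_Ico_le ha_pos ha_le hsum
  have hL1 := tendsto_eLpNorm_one_sub_of_ae_tendsto hMint hae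
    (by simpa using (hb.sqrt.const_mul 2)) fun n m hnm => by
      refine (hindep.integral_abs_prod_range_sub_le hXmeas hpos hint hmean hnm).trans ?_
      simp_rw [← ha]
      gcongr
      exact hb_le n m hnm
  have hMlim_meas : AEStronglyMeasurable Mlim P :=
    aestronglyMeasurable_of_tendsto_ae atTop (fun n => (hMint n).1) hae
  refine ⟨Mlim, hae, ?_, ?_⟩
  · refine ((ENNReal.tendsto_toReal ENNReal.zero_ne_top).comp hL1).congr fun n => ?_
    rw [Function.comp_apply, eLpNorm_one_eq_lintegral_enorm,
      ← integral_norm_eq_lintegral_enorm ((hMint n).1.sub hMlim_meas)]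
    rfl
  · have := tendsto_integral_of_L1' Mlim hMlim_meas (Eventually.of_forall hMint) hL1
    simp only [hindep.integral_finsetProd hXmeas, hmean, prod_const_one] at this
    exact tendsto_nhds_unique this tendsto_const_nhds
end

section
/- Let (Z_i)_{i≥1} be i.i.d. standard exponential random variables and define M_n = ∏_{i=1}^n (i + Z_i)/(i+1). Then M_n converges almost surely and in L¹ to a random variable M_∞ with E(M_∞) = 1. -/
/-!
`M_n` is the partial product of the independent factors `X_i = (i + Z_i)/(i + 1)`, each of mean
one, so it is a martingale for the natural filtration. Since `E X_i² = 1 + 1/(i + 1)²` and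
`∏ (1 + 1/(i + 1)²)` converges, the martingale is bounded in L², hence uniformly integrable, and
the L¹ martingale convergence theorem gives a limit with `E M_∞ = E M_0 = 1`.
-/

open MeasureTheory ProbabilityTheory Filter Real Set
open scoped ENNReal NNReal Nat

namespace MeasureTheory

theorem uniformIntegrable_of_integral_sq_le {ι α : Type*} {m : MeasurableSpace α}
    {μ : Measure α} [IsFiniteMeasure μ] {f : ι → α → ℝ} {B : ℝ}
    (hf : ∀ i, AEStronglyMeasurable (f i) μ) (hsq : ∀ i, Integrable (fun x => f i x ^ 2) μ)
    (hB : ∀ i, ∫ x, f i x ^ 2 ∂μ ≤ B) :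
    UniformIntegrable f 1 μ := by
  refine uniformIntegrable_of le_rfl ENNReal.one_ne_top hf fun ε hε => ?_
  set C : ℝ≥0 := (B / ε).toNNReal + 1
  have hC : (0 : ℝ) < C := by positivity
  have hBC : B / C ≤ ε := by
    rw [div_le_iff₀ hC]
    have := Real.le_coe_toNNReal (B / ε)
    rw [div_le_iff₀ hε] at this
    push_cast [C]
    nlinarith
  refine ⟨C, fun i => ?_⟩
  have hmarkov : ∀ x, ‖{x | C ≤ ‖f i x‖₊}.indicator (f i) x‖ ≤ ‖f i x ^ 2 / C‖ := by
    intro x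
    by_cases hx : C ≤ ‖f i x‖₊
    · rw [Set.indicator_of_mem (show x ∈ {x | C ≤ ‖f i x‖₊} from hx), norm_div, norm_pow,
        Real.norm_of_nonneg hC.le, le_div_iff₀ hC, sq]
      exact mul_le_mul_of_nonneg_left (NNReal.coe_le_coe.mpr hx) (norm_nonneg _)
    · rw [Set.indicator_of_notMem (show x ∉ {x | C ≤ ‖f i x‖₊} from hx), norm_zero]
      exact norm_nonneg _
  calc eLpNorm ({x | C ≤ ‖f i x‖₊}.indicator (f i)) 1 μ
      ≤ eLpNorm (fun x => f i x ^ 2 / C) 1 μ := eLpNorm_mono hmarkov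
    _ = ENNReal.ofReal (∫ x, f i x ^ 2 / C ∂μ) := by
      rw [eLpNorm_one_eq_lintegral_enorm, ← ofReal_integral_norm_eq_lintegral_enorm
        ((hsq i).div_const _)]
      congr 2 with x
      exact Real.norm_of_nonneg (by positivity)
    _ ≤ ENNReal.ofReal ε := by
      rw [integral_div]
      exact ENNReal.ofReal_le_ofReal ((div_le_div_of_nonneg_right (hB i) hC.le).trans hBC)

theorem Martingale.exists_tendsto_of_uniformIntegrable {Ω : Type*} {m0 : MeasurableSpace Ω}
    {μ : Measure Ω} [IsFiniteMeasure μ] {ℱ : Filtration ℕ m0} {f : ℕ → Ω → ℝ}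
    (hf : Martingale f ℱ μ) (hUI : UniformIntegrable f 1 μ) :
    ∃ g : Ω → ℝ, (∀ᵐ ω ∂μ, Tendsto (fun n => f n ω) atTop (nhds (g ω))) ∧
      Tendsto (fun n => ∫ ω, |f n ω - g ω| ∂μ) atTop (nhds 0) ∧
      ∫ ω, g ω ∂μ = ∫ ω, f 0 ω ∂μ := by
  set g := ℱ.limitProcess f μ
  obtain ⟨R, hR⟩ := hUI.2.2
  have hg : Integrable g μ :=
    (Filtration.memLp_limitProcess_of_eLpNorm_bdd hUI.1 hR).integrable le_rfl
  refine ⟨g, hf.submartingale.ae_tendsto_limitProcess_of_uniformIntegrable hUI, ?_, ?_⟩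
  · refine ((ENNReal.tendsto_toReal ENNReal.zero_ne_top).comp
      (hf.submartingale.tendsto_eLpNorm_one_limitProcess hUI)).congr fun n => ?_
    rw [Function.comp_apply, eLpNorm_one_eq_lintegral_enorm,
      ← integral_norm_eq_lintegral_enorm ((hUI.1 n).sub hg.1)]
    rfl
  · rw [integral_congr_ae (hf.ae_eq_condExp_limitProcess hUI 0), integral_condExp (ℱ.le 0)]

end MeasureTheory

namespace ProbabilityTheory

section ExponentialMoments

lemma expMeasure_one_eq_withDensity :
    expMeasure 1 = (volume.restrict (Ici 0)).withDensity fun x => ENNReal.ofReal (exp (-x)) := by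
  rw [← withDensity_indicator measurableSet_Ici, expMeasure, gammaMeasure]
  congr 1 with x
  by_cases hx : 0 ≤ x <;> simp [gammaPDF_eq, hx]

lemma integral_expMeasure_one (g : ℝ → ℝ) :
    ∫ x, g x ∂expMeasure 1 = ∫ x in Ioi 0, exp (-x) * g x := by
  rw [expMeasure_one_eq_withDensity, integral_withDensity_eq_integral_toReal_smul
    (by fun_prop) (ae_of_all _ fun _ => ENNReal.ofReal_lt_top), integral_Ici_eq_integral_Ioi]
  simp [(exp_pos _).le]

lemma integrable_expMeasure_one_iff {g : ℝ → ℝ} :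
    Integrable g (expMeasure 1) ↔ IntegrableOn (fun x => exp (-x) * g x) (Ioi 0) := by
  rw [expMeasure_one_eq_withDensity, integrable_withDensity_iff_integrable_smul'
    (by fun_prop) (ae_of_all _ fun _ => ENNReal.ofReal_lt_top),
    ← integrableOn_Ici_iff_integrableOn_Ioi]
  simp [IntegrableOn, (exp_pos _).le]

lemma integrable_pow_expMeasure_one (k : ℕ) :
    Integrable (fun x : ℝ => x ^ k) (expMeasure 1) := by
  simpa [integrable_expMeasure_one_iff] using GammaIntegral_convergent (s := k + 1) (by positivity)

lemma integral_pow_expMeasure_one (k : ℕ) : ∫ x, x ^ k ∂expMeasure 1 = k ! := by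
  have := Gamma_eq_integral (s := k + 1) (by positivity)
  simp_all [integral_expMeasure_one, Gamma_nat_eq_factorial]

lemma integrable_add_pow_expMeasure_one (c : ℝ) (k : ℕ) :
    Integrable (fun x : ℝ => (c + x) ^ k) (expMeasure 1) := by
  simp_rw [add_pow]
  exact integrable_finsetSum _ fun m _ =>
    ((integrable_pow_expMeasure_one _).const_mul _).mul_const _

lemma integral_add_pow_expMeasure_one (c : ℝ) (k : ℕ) :
    ∫ x, (c + x) ^ k ∂expMeasure 1 =
      ∑ m ∈ Finset.range (k + 1), c ^ m * (k - m)! * k.choose m := by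
  simp_rw [add_pow]
  rw [integral_finsetSum _ fun m _ => ((integrable_pow_expMeasure_one _).const_mul _).mul_const _]
  simp [integral_mul_const, integral_const_mul, integral_pow_expMeasure_one]

variable {Ω : Type*} {m0 : MeasurableSpace Ω} {P : Measure Ω} {Y : Ω → ℝ}

lemma integrable_add_pow_div_of_map_eq_expMeasure_one (hY : Measurable Y)
    (hlaw : P.map Y = expMeasure 1) (c d : ℝ) (k : ℕ) :
    Integrable (fun ω => ((c + Y ω) / d) ^ k) P := by
  have := (integrable_add_pow_expMeasure_one c k).div_const (d ^ k)
  rw [← hlaw, integrable_map_measure (by fun_prop) hY.aemeasurable] at this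
  simpa [div_pow, Function.comp_def] using this

lemma integral_add_pow_div_of_map_eq_expMeasure_one (hY : Measurable Y)
    (hlaw : P.map Y = expMeasure 1) (c d : ℝ) (k : ℕ) :
    ∫ ω, ((c + Y ω) / d) ^ k ∂P =
      (∑ m ∈ Finset.range (k + 1), c ^ m * (k - m)! * k.choose m) / d ^ k := by
  have := integral_map (μ := P) hY.aemeasurable (f := fun x => (c + x) ^ k / d ^ k) (by fun_prop)
  rw [hlaw, integral_div, integral_add_pow_expMeasure_one] at this
  simpa [div_pow] using this.symm

end ExponentialMoments

section ProductMartingale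

variable {Ω : Type*} {m0 : MeasurableSpace Ω} {P : Measure Ω} {X : ℕ → Ω → ℝ}

lemma iIndepFun.integrable_finsetProd_s10 (hX : iIndepFun X P) (hXm : ∀ i, Measurable (X i))
    (hint : ∀ i, Integrable (X i) P) (s : Finset ℕ) : Integrable (∏ i ∈ s, X i) P := by
  classical
  have := hX.isProbabilityMeasure
  induction s using Finset.induction_on with
  | empty => exact integrable_const (1 : ℝ)
  | insert a s ha ih =>
    rw [Finset.prod_insert ha, mul_comm]
    exact (hX.indepFun_finsetProd_of_notMem hXm ha).integrable_mul ih (hint a)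

lemma iIndepFun.integral_finsetProd_s10 (hX : iIndepFun X P) (hXm : ∀ i, Measurable (X i))
    (s : Finset ℕ) : ∫ ω, (∏ i ∈ s, X i) ω ∂P = ∏ i ∈ s, ∫ ω, X i ω ∂P := by
  classical
  have := hX.isProbabilityMeasure
  induction s using Finset.induction_on with
  | empty => simp
  | insert a s ha ih =>
    rw [Finset.prod_insert ha, Finset.prod_insert ha, mul_comm, ← ih, mul_comm (∫ ω, X a ω ∂P)]
    exact (hX.indepFun_finsetProd_of_notMem hXm ha).integral_mul_eq_mul_integral
      (Finset.aestronglyMeasurable_prod _ fun i _ => (hXm i).aestronglyMeasurable)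
      (hXm a).aestronglyMeasurable

theorem iIndepFun.martingale_prod_Icc (hX : iIndepFun X P) (hXm : ∀ i, StronglyMeasurable (X i))
    (hint : ∀ i, Integrable (X i) P) (hmean : ∀ i, ∫ ω, X i ω ∂P = 1) :
    Martingale (fun n => ∏ i ∈ Finset.Icc 1 n, X i) (Filtration.natural X hXm) P := by
  have := hX.isProbabilityMeasure
  set ℱ := Filtration.natural X hXm
  have hadapted : StronglyAdapted ℱ (fun n => ∏ i ∈ Finset.Icc 1 n, X i) := fun n =>
    Finset.stronglyMeasurable_prod _ fun i hi =>
      (Filtration.stronglyAdapted_natural hXm i).mono (ℱ.mono (Finset.mem_Icc.mp hi).2)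
  have hprod_int n := hX.integrable_finsetProd_s10 (fun i => (hXm i).measurable) hint (Finset.Icc 1 n)
  refine martingale_nat hadapted hprod_int fun n => ?_
  have hnext : P[X (n + 1) | ℱ n] =ᵐ[P] fun _ => 1 := by
    simpa [hmean] using hX.condExp_natural_ae_eq_of_lt hXm n.lt_succ_self
  have hsucc : ∏ i ∈ Finset.Icc 1 (n + 1), X i = (∏ i ∈ Finset.Icc 1 n, X i) * X (n + 1) :=
    Finset.prod_Icc_succ_top n.succ_pos _
  rw [hsucc]
  refine (condExp_mul_of_stronglyMeasurable_left (hadapted n) (hsucc ▸ hprod_int (n + 1))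
    (hint (n + 1))).trans ?_ |>.symm
  filter_upwards [hnext] with ω hω
  simp [hω]

theorem iIndepFun.uniformIntegrable_prod_Icc (hX : iIndepFun X P) (hXm : ∀ i, Measurable (X i))
    (hsq : ∀ i, Integrable (fun ω => X i ω ^ 2) P) {B : ℝ}
    (hB : ∀ n, ∏ i ∈ Finset.Icc 1 n, ∫ ω, X i ω ^ 2 ∂P ≤ B) :
    UniformIntegrable (fun n => ∏ i ∈ Finset.Icc 1 n, X i) 1 P := by
  have := hX.isProbabilityMeasure
  have hXsq : iIndepFun (fun i ω => X i ω ^ 2) P := hX.comp (fun _ x => x ^ 2) fun _ => by fun_prop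
  have hXsqm : ∀ i, Measurable fun ω => X i ω ^ 2 := fun i => (hXm i).pow_const 2
  have hprod_sq : ∀ n, (fun ω => (∏ i ∈ Finset.Icc 1 n, X i) ω ^ 2) =
      ∏ i ∈ Finset.Icc 1 n, fun ω => X i ω ^ 2 := fun n => by
    ext ω
    simp [Finset.prod_apply, Finset.prod_pow]
  refine uniformIntegrable_of_integral_sq_le (B := B)
    (fun n => Finset.aestronglyMeasurable_prod _ fun i _ => (hXm i).aestronglyMeasurable)
    (fun n => hprod_sq n ▸ hXsq.integrable_finsetProd_s10 hXsqm hsq _) fun n => ?_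
  rw [hprod_sq, hXsq.integral_finsetProd_s10 hXsqm]
  exact hB n

end ProductMartingale

end ProbabilityTheory

lemma prod_Icc_one_add_inv_sq_le_two (n : ℕ) :
    ∏ i ∈ Finset.Icc 1 n, (1 + 1 / ((i : ℝ) + 1) ^ 2) ≤ 2 := by
  suffices h : ∏ i ∈ Finset.Icc 1 n, (1 + 1 / ((i : ℝ) + 1) ^ 2) ≤ 2 * ((n : ℝ) + 1) / (n + 2) by
    exact h.trans ((div_le_iff₀ (by positivity)).mpr (by linarith))
  induction n with
  | zero => norm_num
  | succ n ih =>
    rw [Finset.prod_Icc_succ_top (by omega)]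
    -- with `a = n + 2` the step is `(a - 1) (a + 1) (a² + 1) ≤ a⁴`
    calc _ ≤ 2 * ((n : ℝ) + 1) / (n + 2) * (1 + 1 / ((n + 1 : ℕ) + 1 : ℝ) ^ 2) := by gcongr
      _ ≤ 2 * ((n + 1 : ℕ) + 1 : ℝ) / ((n + 1 : ℕ) + 2) := by
        push_cast
        rw [div_mul_eq_mul_div, div_le_div_iff₀ (by positivity) (by positivity)]
        field_simp
        nlinarith

theorem exponential_product_martingale_converges
    {Ω : Type*} {m0 : MeasurableSpace Ω} {P : Measure Ω} [IsProbabilityMeasure P]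
    (Z : ℕ → Ω → ℝ) (hZmeas : ∀ i, Measurable (Z i))
    (hindep : iIndepFun Z P)
    (hdist : ∀ i, Measure.map (Z i) P = expMeasure 1)
    (M : ℕ → Ω → ℝ)
    (hM : ∀ n ω, M n ω = ∏ i ∈ Finset.Icc 1 n, ((i : ℝ) + Z i ω) / ((i : ℝ) + 1)) :
    ∃ Mlim : Ω → ℝ,
      (∀ᵐ ω ∂P, Tendsto (fun n => M n ω) atTop (nhds (Mlim ω))) ∧
      Tendsto (fun n => ∫ ω, |M n ω - Mlim ω| ∂P) atTop (nhds 0) ∧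
      ∫ ω, Mlim ω ∂P = 1 := by
  set X : ℕ → Ω → ℝ := fun i ω => ((i : ℝ) + Z i ω) / ((i : ℝ) + 1)
  have hXm : ∀ i, Measurable (X i) := fun i => by fun_prop
  have hX : iIndepFun X P :=
    hindep.comp (fun i x => ((i : ℝ) + x) / ((i : ℝ) + 1)) fun i => by fun_prop
  have hpow_int i k := integrable_add_pow_div_of_map_eq_expMeasure_one (hZmeas i) (hdist i)
    (i : ℝ) ((i : ℝ) + 1) k
  have hpow_integral i k := integral_add_pow_div_of_map_eq_expMeasure_one (hZmeas i) (hdist i)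
    (i : ℝ) ((i : ℝ) + 1) k
  have hmean : ∀ i, ∫ ω, X i ω ∂P = 1 := fun i => by
    have h := hpow_integral i 1
    simp only [pow_one] at h
    rw [h, div_eq_one_iff_eq (by positivity)]
    simp [Finset.sum_range_succ, add_comm]
  have hsq : ∀ i, ∫ ω, X i ω ^ 2 ∂P = 1 + 1 / ((i : ℝ) + 1) ^ 2 := fun i => by
    rw [hpow_integral i 2, Finset.sum_range_succ, Finset.sum_range_succ, Finset.sum_range_one]
    field_simp
    norm_num
    ring
  have hmart := hX.martingale_prod_Icc (fun i => (hXm i).stronglyMeasurable)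
    (fun i => by simpa using hpow_int i 1) hmean
  have hUI := hX.uniformIntegrable_prod_Icc hXm (fun i => hpow_int i 2) (B := 2) fun n => by
    simpa only [hsq] using prod_Icc_one_add_inv_sq_le_two n
  obtain ⟨Mlim, hae, hL1, hlim⟩ := hmart.exists_tendsto_of_uniformIntegrable hUI
  have hMX : ∀ n ω, M n ω = (∏ i ∈ Finset.Icc 1 n, X i) ω := by simp [hM, Finset.prod_apply, X]
  refine ⟨Mlim, by simpa only [hMX] using hae, by simpa only [hMX] using hL1, by simpa using hlim⟩
end

section
/- Let Z be a standard exponential random variable and m ≥ 1. Define a_m = E(√((m+Z)/(m+1))). Then 1 - a_m = O(1/m²) as m → ∞; in particular ∑_{m=1}^∞ (1 - a_m) < ∞. -/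
open MeasureTheory Filter
open scoped BigOperators

/-!
Put `u = (z - 1) / (m + 1)`, so that the integrand of `a m` is `exp (-z) * √(1 + u)`. Since
`∫ exp (-z) * (z - 1) = 0`, we get `1 - a m = ∫ exp (-z) * (1 + u / 2 - √(1 + u))`.
The remainder `1 + u / 2 - √(1 + u) = (1 - √(1 + u)) ^ 2 / 2` lies between `0` and `u ^ 2 / 2`,
and `∫ exp (-z) * (z - 1) ^ 2 = 1`, hence `0 ≤ 1 - a m ≤ 1 / (2 * (m + 1) ^ 2)`.
-/

open Real Set

namespace Real

lemma one_add_div_two_sub_sqrt_one_add_eq_sq {u : ℝ} (hu : -1 ≤ u) :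
    1 + u / 2 - √(1 + u) = (1 - √(1 + u)) ^ 2 / 2 := by
  have := sq_sqrt (by linarith : 0 ≤ 1 + u)
  linear_combination -this / 2

lemma abs_one_sub_sqrt_one_add_le {u : ℝ} (hu : -1 ≤ u) : |1 - √(1 + u)| ≤ |u| := by
  have hs := sq_sqrt (by linarith : 0 ≤ 1 + u)
  have hprod : |1 - √(1 + u)| * (1 + √(1 + u)) = |u| := by
    rw [← abs_of_nonneg (by positivity : 0 ≤ 1 + √(1 + u)), ← abs_mul, ← abs_neg u]
    congr 1
    linear_combination -hs
  nlinarith [abs_nonneg (1 - √(1 + u)), sqrt_nonneg (1 + u)]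

lemma one_add_div_two_sub_sqrt_one_add_le {u : ℝ} (hu : -1 ≤ u) :
    1 + u / 2 - √(1 + u) ≤ u ^ 2 / 2 := by
  have := pow_le_pow_left₀ (abs_nonneg _) (abs_one_sub_sqrt_one_add_le hu) 2
  rw [sq_abs, sq_abs] at this
  rw [one_add_div_two_sub_sqrt_one_add_eq_sq hu]
  linarith

end Real

lemma integrableOn_exp_neg_mul_pow (n : ℕ) :
    IntegrableOn (fun z : ℝ => exp (-z) * z ^ n) (Ioi 0) := by
  refine (GammaIntegral_convergent (s := n + 1) (by positivity)).congr_fun (fun z _ => ?_)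
    measurableSet_Ioi
  simp only [add_sub_cancel_right, rpow_natCast]

lemma integral_exp_neg_mul_pow (n : ℕ) :
    ∫ z in Ioi 0, exp (-z) * z ^ n = n.factorial := by
  have h := Gamma_eq_integral (s := n + 1) (by positivity)
  simp only [add_sub_cancel_right, rpow_natCast] at h
  rw [← h, Gamma_nat_eq_factorial]

lemma exp_neg_mul_quadratic_eq (a b c z : ℝ) :
    exp (-z) * (a + b * z + c * z ^ 2) =
      a * (exp (-z) * z ^ 0) + b * (exp (-z) * z ^ 1) + c * (exp (-z) * z ^ 2) := by
  ring

lemma integrableOn_exp_neg_mul_quadratic (a b c : ℝ) :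
    IntegrableOn (fun z : ℝ => exp (-z) * (a + b * z + c * z ^ 2)) (Ioi 0) := by
  have h := integrableOn_exp_neg_mul_pow
  simp_rw [exp_neg_mul_quadratic_eq]
  exact (((h 0).const_mul a).add ((h 1).const_mul b)).add ((h 2).const_mul c)

lemma integral_exp_neg_mul_quadratic (a b c : ℝ) :
    ∫ z in Ioi 0, exp (-z) * (a + b * z + c * z ^ 2) = a + b + 2 * c := by
  have h := integrableOn_exp_neg_mul_pow
  simp_rw [exp_neg_mul_quadratic_eq]
  rw [integral_add ?_ ((h 2).const_mul c), integral_add ((h 0).const_mul a) ((h 1).const_mul b)]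
  · simp only [integral_const_mul, integral_exp_neg_mul_pow]
    norm_num
    ring
  · exact ((h 0).const_mul a).add ((h 1).const_mul b)

section

variable {M : ℝ}

lemma neg_one_le_sub_one_div {z : ℝ} (hM : 1 ≤ M) (hz : 0 < z) : -1 ≤ (z - 1) / M := by
  rw [le_div_iff₀ (by linarith)]
  linarith

lemma exp_neg_mul_one_add_div_two_eq_quadratic (z : ℝ) :
    exp (-z) * (1 + (z - 1) / M / 2) =
      exp (-z) * ((1 - 1 / (2 * M)) + 1 / (2 * M) * z + 0 * z ^ 2) := by
  ring

lemma exp_neg_mul_sq_div_two_eq_quadratic (z : ℝ) :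
    exp (-z) * (((z - 1) / M) ^ 2 / 2) =
      exp (-z) * (1 / (2 * M ^ 2) + (-1 / M ^ 2) * z + 1 / (2 * M ^ 2) * z ^ 2) := by
  ring

lemma integrableOn_exp_neg_mul_sqrt_one_add (hM : 1 ≤ M) :
    IntegrableOn (fun z : ℝ => exp (-z) * √(1 + (z - 1) / M)) (Ioi 0) := by
  refine Integrable.mono' (integrableOn_exp_neg_mul_quadratic (1 - 1 / (2 * M)) (1 / (2 * M)) 0)
    (by fun_prop : Continuous _).aestronglyMeasurable ?_
  rw [ae_restrict_iff' measurableSet_Ioi]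
  refine .of_forall fun z hz => ?_
  rw [norm_of_nonneg (by positivity), ← exp_neg_mul_one_add_div_two_eq_quadratic]
  gcongr
  exact sqrt_one_add_le (neg_one_le_sub_one_div hM hz)

lemma one_sub_integral_exp_neg_mul_sqrt_one_add_mem (hM : 1 ≤ M) :
    1 - ∫ z in Ioi 0, exp (-z) * √(1 + (z - 1) / M) ∈ Icc 0 (1 / (2 * M ^ 2)) := by
  have hlin : IntegrableOn (fun z : ℝ => exp (-z) * (1 + (z - 1) / M / 2)) (Ioi 0) := by
    simpa only [exp_neg_mul_one_add_div_two_eq_quadratic] using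
      integrableOn_exp_neg_mul_quadratic _ _ _
  have hlin_eq : ∫ z in Ioi 0, exp (-z) * (1 + (z - 1) / M / 2) = 1 := by
    simp_rw [exp_neg_mul_one_add_div_two_eq_quadratic, integral_exp_neg_mul_quadratic]
    ring
  have hsq : IntegrableOn (fun z : ℝ => exp (-z) * (((z - 1) / M) ^ 2 / 2)) (Ioi 0) := by
    simpa only [exp_neg_mul_sq_div_two_eq_quadratic] using
      integrableOn_exp_neg_mul_quadratic _ _ _
  have hsq_eq : ∫ z in Ioi 0, exp (-z) * (((z - 1) / M) ^ 2 / 2) = 1 / (2 * M ^ 2) := by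
    simp_rw [exp_neg_mul_sq_div_two_eq_quadratic, integral_exp_neg_mul_quadratic]
    field_simp
    ring
  have heq : 1 - ∫ z in Ioi 0, exp (-z) * √(1 + (z - 1) / M) =
      ∫ z in Ioi 0, exp (-z) * (1 + (z - 1) / M / 2 - √(1 + (z - 1) / M)) := by
    simp_rw [mul_sub]
    rw [integral_sub hlin (integrableOn_exp_neg_mul_sqrt_one_add hM), hlin_eq]
  have hrem_nonneg : ∀ z ∈ Ioi (0 : ℝ),
      0 ≤ exp (-z) * (1 + (z - 1) / M / 2 - √(1 + (z - 1) / M)) := fun z hz => by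
    rw [one_add_div_two_sub_sqrt_one_add_eq_sq (neg_one_le_sub_one_div hM hz)]
    positivity
  rw [heq, ← hsq_eq]
  refine ⟨setIntegral_nonneg measurableSet_Ioi hrem_nonneg,
    setIntegral_mono_of_nonneg hrem_nonneg (fun z hz => ?_) hsq⟩
  gcongr
  exact one_add_div_two_sub_sqrt_one_add_le (neg_one_le_sub_one_div hM hz)

end

theorem one_sub_a_isBigO_inv_sq
    (a : ℕ → ℝ)
    (ha : ∀ m, a m = ∫ z in Set.Ioi (0:ℝ),
      Real.exp (-z) * Real.sqrt (((m : ℝ) + z) / ((m : ℝ) + 1))) :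
    (fun m : ℕ => 1 - a m) =O[atTop] (fun m : ℕ => 1 / (m : ℝ) ^ 2) ∧
      Summable (fun m : ℕ => 1 - a m) := by
  have hbound (m : ℕ) : |1 - a m| ≤ 1 / (2 * ((m : ℝ) + 1) ^ 2) := by
    have hshift (z : ℝ) : ((m : ℝ) + z) / ((m : ℝ) + 1) = 1 + (z - 1) / ((m : ℝ) + 1) := by
      field_simp
      ring
    obtain ⟨hnonneg, hle⟩ := one_sub_integral_exp_neg_mul_sqrt_one_add_mem
      (le_add_of_nonneg_left (Nat.cast_nonneg m) : (1 : ℝ) ≤ m + 1)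
    simp_rw [ha m, hshift, abs_of_nonneg hnonneg]
    exact hle
  have hO : (fun m : ℕ => 1 - a m) =O[atTop] (fun m : ℕ => 1 / (m : ℝ) ^ 2) := by
    refine Asymptotics.IsBigO.of_bound' ?_
    filter_upwards [eventually_ge_atTop 1] with m hm_pos
    have hm : (1 : ℝ) ≤ m := mod_cast hm_pos
    rw [norm_eq_abs, norm_of_nonneg (by positivity)]
    refine (hbound m).trans (one_div_le_one_div_of_le (by positivity) ?_)
    nlinarith
  exact ⟨hO, summable_of_isBigO_nat (summable_one_div_nat_pow.mpr one_lt_two) hO⟩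
end

section
/- Let U_n, U_{n+1}, … be i.i.d. uniform random variables on [0,1], t_n > 0, and define T_n = t_n and T_{m+1} = ((m+2)/(m+1)) · max(m/(m+1), U_m) · T_m for m ≥ n. Then T_m converges almost surely to a positive random variable T_∞ with t_n · n/(n+1) ≤ E(T_∞) ≤ t_n · (n/(n+1)) e^{1/(2n)}. -/
/-!
Since `max (m/(m+1)) U_m ≥ m/(m+1)`, the rescaled sequence `S_m = (m/(m+1)) T_m` is
nondecreasing, starting from `t_n n/(n+1)`. By independence `E T_m = t_n ∏_{k<m} μ_k`, and
`μ_k h(k+1) ≤ h(k)` for `h(k) = (k/(k+1)) e^{1/(2k)}`, so `E S_m ≤ E T_m h(m) ≤ t_n h(n)`.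
Monotone convergence then yields an integrable almost sure limit of `S_m`, hence of `T_m`,
bounded below by `t_n n/(n+1)` and with mean at most `t_n h(n)`.
-/

open MeasureTheory ProbabilityTheory Filter
open scoped BigOperators ENNReal Topology

theorem exists_ae_tendsto_of_monotone_of_integral_le {α : Type*} [MeasurableSpace α]
    {μ : Measure α} {f : ℕ → α → ℝ} {C : ℝ} (hf : ∀ n, Integrable (f n) μ)
    (hf0 : ∀ x, 0 ≤ f 0 x) (hmono : ∀ x, Monotone (f · x)) (hC : ∀ n, ∫ x, f n x ∂μ ≤ C) :
    ∃ F : α → ℝ, (∀ᵐ x ∂μ, Tendsto (f · x) atTop (𝓝 (F x))) ∧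
      Integrable F μ ∧ ∫ x, F x ∂μ ≤ C := by
  have hf_nonneg : ∀ n x, 0 ≤ f n x := fun n x => (hf0 x).trans (hmono x (Nat.zero_le n))
  have hmono' : ∀ x, Monotone fun n => ENNReal.ofReal (f n x) :=
    fun x _ _ hmk => ENNReal.ofReal_le_ofReal (hmono x hmk)
  set G : α → ℝ≥0∞ := fun x => ⨆ n, ENNReal.ofReal (f n x)
  have hG_meas : AEMeasurable G μ := AEMeasurable.iSup fun n => (hf n).aemeasurable.ennreal_ofReal
  have hG_le : ∫⁻ x, G x ∂μ ≤ ENNReal.ofReal C := by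
    rw [lintegral_iSup' (fun n => (hf n).aemeasurable.ennreal_ofReal) (ae_of_all _ hmono')]
    refine iSup_le fun n => ?_
    rw [← ofReal_integral_eq_lintegral_ofReal (hf n) (ae_of_all _ (hf_nonneg n))]
    exact ENNReal.ofReal_le_ofReal (hC n)
  have hG_ne_top : ∫⁻ x, G x ∂μ ≠ ∞ := ne_top_of_le_ne_top ENNReal.ofReal_ne_top hG_le
  have hG_lt_top := ae_lt_top' hG_meas hG_ne_top
  refine ⟨fun x => (G x).toReal, ?_, integrable_toReal_of_lintegral_ne_top hG_meas hG_ne_top, ?_⟩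
  · filter_upwards [hG_lt_top] with x hx
    have := (ENNReal.tendsto_toReal hx.ne).comp (tendsto_atTop_iSup (hmono' x))
    simpa only [Function.comp_def, ENNReal.toReal_ofReal (hf_nonneg _ x)] using this
  · rw [integral_toReal hG_meas hG_lt_top]
    exact ENNReal.toReal_le_of_le_ofReal ((integral_nonneg (hf_nonneg 0)).trans (hC 0)) hG_le

theorem ProbabilityTheory.iIndepFun.integral_finset_prod_comp {Ω ι β : Type*}
    {mΩ : MeasurableSpace Ω} {P : Measure Ω} [MeasurableSpace β] {X : ι → Ω → β} (hX : iIndepFun X P)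
    (hX_meas : ∀ i, AEMeasurable (X i) P) {g : ι → β → ℝ}
    (hg : ∀ i, AEStronglyMeasurable (g i) (P.map (X i))) (s : Finset ι) :
    ∫ ω, ∏ i ∈ s, g i (X i ω) ∂P = ∏ i ∈ s, ∫ ω, g i (X i ω) ∂P := by
  simp_rw [← Finset.prod_coe_sort s]
  exact (hX.precomp Subtype.val_injective).integral_fun_prod_comp (f := fun i : s => g i)
    (fun i => hX_meas i) (fun i => hg i)

theorem Finset.eq_mul_prod_Ico_of_succ_eq_mul {M : Type*} [CommMonoid M] {x a : ℕ → M} {n : ℕ}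
    (h : ∀ m ≥ n, x (m + 1) = a m * x m) {m : ℕ} (hm : n ≤ m) :
    x m = x n * ∏ k ∈ Finset.Ico n m, a k := by
  induction m, hm using Nat.le_induction with
  | base => simp
  | succ m hm ih => rw [h m hm, ih, Finset.prod_Ico_succ_top hm]; ac_rfl

theorem setIntegral_Icc_zero_one_max {c : ℝ} (hc0 : 0 ≤ c) (hc1 : c ≤ 1) :
    ∫ x in Set.Icc (0 : ℝ) 1, max c x = (1 + c ^ 2) / 2 := by
  have hcont : Continuous fun x : ℝ => max c x := continuous_const.max continuous_id
  have h_left : ∫ x in (0 : ℝ)..c, max c x = c * c := by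
    rw [intervalIntegral.integral_congr (g := fun _ => c) fun x hx => by
      rw [Set.uIcc_of_le hc0] at hx; exact max_eq_left hx.2]
    simp
  have h_right : ∫ x in c..(1 : ℝ), max c x = (1 - c ^ 2) / 2 := by
    rw [intervalIntegral.integral_congr (g := id) fun x hx => by
      rw [Set.uIcc_of_le hc1] at hx; exact max_eq_right hx.1]
    simp [integral_id]
  rw [integral_Icc_eq_integral_Ioc, ← intervalIntegral.integral_of_le zero_le_one,
    ← intervalIntegral.integral_add_adjacent_intervals (b := c) (hcont.intervalIntegrable _ _)
      (hcont.intervalIntegrable _ _), h_left, h_right]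
  ring

noncomputable def fiducialFactor (m : ℕ) (x : ℝ) : ℝ :=
  ((m : ℝ) + 2) / ((m : ℝ) + 1) * max ((m : ℝ) / ((m : ℝ) + 1)) x

noncomputable def fiducialMean (m : ℕ) : ℝ :=
  ((m : ℝ) + 2) / ((m : ℝ) + 1) * ((1 + ((m : ℝ) / ((m : ℝ) + 1)) ^ 2) / 2)

noncomputable def fiducialBound (m : ℕ) : ℝ :=
  (m : ℝ) / ((m : ℝ) + 1) * Real.exp (1 / (2 * (m : ℝ)))

theorem fiducialFactor_nonneg (m : ℕ) (x : ℝ) : 0 ≤ fiducialFactor m x := by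
  unfold fiducialFactor
  exact mul_nonneg (by positivity) ((by positivity : (0 : ℝ) ≤ m / (m + 1)).trans (le_max_left _ _))

theorem measurable_fiducialFactor (m : ℕ) : Measurable (fiducialFactor m) :=
  (measurable_const.max measurable_id).const_mul _

theorem fiducialMean_pos (m : ℕ) : 0 < fiducialMean m := by
  unfold fiducialMean; positivity

theorem integral_fiducialFactor_comp {Ω : Type*} {m0 : MeasurableSpace Ω} {P : Measure Ω}
    {X : Ω → ℝ} (hX : Measurable X) (hX_map : P.map X = volume.restrict (Set.Icc (0 : ℝ) 1))
    (m : ℕ) : ∫ ω, fiducialFactor m (X ω) ∂P = fiducialMean m := by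
  rw [← integral_map hX.aemeasurable (measurable_fiducialFactor m).aestronglyMeasurable, hX_map]
  unfold fiducialFactor fiducialMean
  rw [integral_const_mul, setIntegral_Icc_zero_one_max (by positivity)
    (div_le_one_of_le₀ (by linarith) (by positivity))]

theorem div_add_one_le_fiducialBound (m : ℕ) : (m : ℝ) / ((m : ℝ) + 1) ≤ fiducialBound m :=
  le_mul_of_one_le_right (by positivity) (Real.one_le_exp (by positivity))

theorem fiducialMean_mul_fiducialBound_succ_le {m : ℕ} (hm : 1 ≤ m) :
    fiducialMean m * fiducialBound (m + 1) ≤ fiducialBound m := by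
  set δ : ℝ := 1 / (2 * (m : ℝ)) - 1 / (2 * ((m : ℝ) + 1))
  -- `(1 + c²)/2 = c (1 + δ)` for `c = m/(m+1)`, and `1 + δ ≤ exp δ`
  calc fiducialMean m * fiducialBound (m + 1)
      = (m : ℝ) / ((m : ℝ) + 1) * (δ + 1) * Real.exp (1 / (2 * ((m : ℝ) + 1))) := by
        unfold fiducialMean fiducialBound δ
        push_cast
        field_simp
        ring
    _ ≤ (m : ℝ) / ((m : ℝ) + 1) * Real.exp δ * Real.exp (1 / (2 * ((m : ℝ) + 1))) := by
        gcongr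
        exact Real.add_one_le_exp δ
    _ = fiducialBound m := by
        rw [mul_assoc, ← Real.exp_add]
        unfold fiducialBound δ
        ring_nf

theorem prod_fiducialMean_mul_fiducialBound_le {n m : ℕ} (hn : 1 ≤ n) (hnm : n ≤ m) :
    (∏ k ∈ Finset.Ico n m, fiducialMean k) * fiducialBound m ≤ fiducialBound n := by
  induction m, hnm using Nat.le_induction with
  | base => simp
  | succ m hnm ih =>
    calc (∏ k ∈ Finset.Ico n (m + 1), fiducialMean k) * fiducialBound (m + 1)
        = (∏ k ∈ Finset.Ico n m, fiducialMean k) * (fiducialMean m * fiducialBound (m + 1)) := by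
          rw [Finset.prod_Ico_succ_top hnm, mul_assoc]
      _ ≤ (∏ k ∈ Finset.Ico n m, fiducialMean k) * fiducialBound m := by
          gcongr
          · exact Finset.prod_nonneg fun k _ => (fiducialMean_pos k).le
          · exact fiducialMean_mul_fiducialBound_succ_le (hn.trans hnm)
      _ ≤ fiducialBound n := ih

theorem tendsto_of_tendsto_div_add_one_mul {x : ℕ → ℝ} {L : ℝ}
    (h : Tendsto (fun m : ℕ => (m : ℝ) / ((m : ℝ) + 1) * x m) atTop (𝓝 L)) :
    Tendsto x atTop (𝓝 L) := by
  have hinv := (tendsto_natCast_div_add_atTop (1 : ℝ)).inv₀ one_ne_zero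
  rw [inv_one] at hinv
  simpa using (hinv.mul h).congr' <| (eventually_ge_atTop 1).mono fun m hm => by
    have : (m : ℝ) ≠ 0 := by positivity
    field_simp

section FiducialRecursion

variable {Ω : Type*} {U T : ℕ → Ω → ℝ} {n : ℕ} {tn : ℝ}

theorem eq_mul_prod_fiducialFactor (hTn : ∀ ω, T n ω = tn)
    (hrec : ∀ m ≥ n, ∀ ω, T (m + 1) ω = fiducialFactor m (U m ω) * T m ω)
    {m : ℕ} (hm : n ≤ m) (ω : Ω) :
    T m ω = tn * ∏ k ∈ Finset.Ico n m, fiducialFactor k (U k ω) := by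
  rw [Finset.eq_mul_prod_Ico_of_succ_eq_mul (x := (T · ω)) (fun m hm => hrec m hm ω) hm, hTn]

theorem integral_eq_mul_prod_fiducialMean {m0 : MeasurableSpace Ω} {P : Measure Ω}
    (hU_meas : ∀ m, Measurable (U m)) (hindep : iIndepFun U P)
    (hdist : ∀ m, P.map (U m) = volume.restrict (Set.Icc (0 : ℝ) 1))
    (hTn : ∀ ω, T n ω = tn)
    (hrec : ∀ m ≥ n, ∀ ω, T (m + 1) ω = fiducialFactor m (U m ω) * T m ω)
    {m : ℕ} (hm : n ≤ m) :
    ∫ ω, T m ω ∂P = tn * ∏ k ∈ Finset.Ico n m, fiducialMean k := by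
  simp_rw [eq_mul_prod_fiducialFactor hTn hrec hm, integral_const_mul,
    hindep.integral_finset_prod_comp (fun k => (hU_meas k).aemeasurable)
      (fun k => (measurable_fiducialFactor k).aestronglyMeasurable),
    integral_fiducialFactor_comp (hU_meas _) (hdist _)]

theorem div_add_one_mul_le_div_add_one_mul_succ (htn : 0 ≤ tn) (hTn : ∀ ω, T n ω = tn)
    (hrec : ∀ m ≥ n, ∀ ω, T (m + 1) ω = fiducialFactor m (U m ω) * T m ω)
    {m : ℕ} (hm : n ≤ m) (ω : Ω) :
    (m : ℝ) / ((m : ℝ) + 1) * T m ω ≤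
      ((m + 1 : ℕ) : ℝ) / (((m + 1 : ℕ) : ℝ) + 1) * T (m + 1) ω := by
  have hT : 0 ≤ T m ω := by
    rw [eq_mul_prod_fiducialFactor hTn hrec hm]
    exact mul_nonneg htn (Finset.prod_nonneg fun k _ => fiducialFactor_nonneg k _)
  have hcancel : ((m + 1 : ℕ) : ℝ) / (((m + 1 : ℕ) : ℝ) + 1) * T (m + 1) ω =
      max ((m : ℝ) / ((m : ℝ) + 1)) (U m ω) * T m ω := by
    rw [hrec m hm, fiducialFactor]
    push_cast
    field_simp
    ring
  rw [hcancel]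
  exact mul_le_mul_of_nonneg_right (le_max_left _ _) hT

section Integral

variable {m0 : MeasurableSpace Ω} {P : Measure Ω}

theorem integrable_of_fiducial_rec (hU_meas : ∀ m, Measurable (U m)) (hindep : iIndepFun U P)
    (hdist : ∀ m, P.map (U m) = volume.restrict (Set.Icc (0 : ℝ) 1)) (htn : 0 < tn)
    (hTn : ∀ ω, T n ω = tn)
    (hrec : ∀ m ≥ n, ∀ ω, T (m + 1) ω = fiducialFactor m (U m ω) * T m ω)
    {m : ℕ} (hm : n ≤ m) : Integrable (T m) P := by
  -- a non-integrable function would have Bochner integral `0`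
  refine Integrable.of_integral_ne_zero ?_
  rw [integral_eq_mul_prod_fiducialMean hU_meas hindep hdist hTn hrec hm]
  exact (mul_pos htn (Finset.prod_pos fun k _ => fiducialMean_pos k)).ne'

theorem integral_div_add_one_mul_le (hU_meas : ∀ m, Measurable (U m)) (hindep : iIndepFun U P)
    (hdist : ∀ m, P.map (U m) = volume.restrict (Set.Icc (0 : ℝ) 1)) (hn : 1 ≤ n) (htn : 0 ≤ tn)
    (hTn : ∀ ω, T n ω = tn)
    (hrec : ∀ m ≥ n, ∀ ω, T (m + 1) ω = fiducialFactor m (U m ω) * T m ω)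
    {m : ℕ} (hm : n ≤ m) :
    ∫ ω, (m : ℝ) / ((m : ℝ) + 1) * T m ω ∂P ≤ tn * fiducialBound n := by
  rw [integral_const_mul, integral_eq_mul_prod_fiducialMean hU_meas hindep hdist hTn hrec hm]
  have hprod := Finset.prod_pos fun k (_ : k ∈ Finset.Ico n m) => fiducialMean_pos k
  calc _ ≤ fiducialBound m * (tn * ∏ k ∈ Finset.Ico n m, fiducialMean k) :=
        mul_le_mul_of_nonneg_right (div_add_one_le_fiducialBound _) (by positivity)
    _ = tn * ((∏ k ∈ Finset.Ico n m, fiducialMean k) * fiducialBound m) := by ring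
    _ ≤ tn * fiducialBound n := by
        gcongr; exact prod_fiducialMean_mul_fiducialBound_le hn hm

end Integral

end FiducialRecursion

theorem uniform_fiducial_limit
    {Ω : Type*} {m0 : MeasurableSpace Ω} {P : Measure Ω} [IsProbabilityMeasure P]
    (U : ℕ → Ω → ℝ) (hUmeas : ∀ m, Measurable (U m))
    (hindep : iIndepFun U P)
    (hdist : ∀ m, Measure.map (U m) P = volume.restrict (Set.Icc (0:ℝ) 1))
    (n : ℕ) (hn : 1 ≤ n) (tn : ℝ) (htn : 0 < tn)
    (T : ℕ → Ω → ℝ) (hTn : ∀ ω, T n ω = tn)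
    (hrec : ∀ m ≥ n, ∀ ω, T (m + 1) ω =
      (((m : ℝ) + 2) / ((m : ℝ) + 1)) * max ((m : ℝ) / ((m : ℝ) + 1)) (U m ω) * T m ω) :
    ∃ Tlim : Ω → ℝ,
      (∀ᵐ ω ∂P, Tendsto (fun m => T m ω) atTop (nhds (Tlim ω)) ∧ 0 < Tlim ω) ∧
      tn * ((n : ℝ) / ((n : ℝ) + 1)) ≤ ∫ ω, Tlim ω ∂P ∧
      ∫ ω, Tlim ω ∂P ≤ tn * ((n : ℝ) / ((n : ℝ) + 1)) * Real.exp (1 / (2 * (n : ℝ))) := by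
  replace hrec : ∀ m ≥ n, ∀ ω, T (m + 1) ω = fiducialFactor m (U m ω) * T m ω := hrec
  set S : ℕ → Ω → ℝ := fun j ω => ((j + n : ℕ) : ℝ) / (((j + n : ℕ) : ℝ) + 1) * T (j + n) ω
  have hS_mono : ∀ ω, Monotone (S · ω) := fun ω => monotone_nat_of_le_succ fun j => by
    simpa only [S, Nat.succ_add] using
      div_add_one_mul_le_div_add_one_mul_succ htn.le hTn hrec (Nat.le_add_left n j) ω
  have hS_zero : ∀ ω, S 0 ω = tn * ((n : ℝ) / ((n : ℝ) + 1)) := fun ω => by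
    simp only [S, zero_add, hTn, mul_comm]
  have hS_int : ∀ j, Integrable (S j) P := fun j =>
    (integrable_of_fiducial_rec hUmeas hindep hdist htn hTn hrec (Nat.le_add_left n j)).const_mul _
  have hS_le : ∀ j, ∫ ω, S j ω ∂P ≤ tn * fiducialBound n := fun j =>
    integral_div_add_one_mul_le hUmeas hindep hdist hn htn.le hTn hrec (Nat.le_add_left n j)
  obtain ⟨F, hF_tendsto, hF_int, hF_le⟩ := exists_ae_tendsto_of_monotone_of_integral_le hS_int
    (fun ω => by rw [hS_zero]; positivity) hS_mono hS_le
  have hF_ge : ∀ᵐ ω ∂P, tn * ((n : ℝ) / ((n : ℝ) + 1)) ≤ F ω := by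
    filter_upwards [hF_tendsto] with ω hω
    exact hS_zero ω ▸ ge_of_tendsto' hω fun j => hS_mono ω (Nat.zero_le j)
  refine ⟨F, ?_, ?_, ?_⟩
  · filter_upwards [hF_tendsto, hF_ge] with ω hω hω_ge
    exact ⟨tendsto_of_tendsto_div_add_one_mul ((tendsto_add_atTop_iff_nat n).mp hω),
      lt_of_lt_of_le (by positivity) hω_ge⟩
  · calc tn * ((n : ℝ) / ((n : ℝ) + 1)) = ∫ _, tn * ((n : ℝ) / ((n : ℝ) + 1)) ∂P := by simp
      _ ≤ ∫ ω, F ω ∂P := integral_mono_ae (integrable_const _) hF_int hF_ge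
  · simpa only [fiducialBound, mul_assoc] using hF_le
end
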